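/- Let α ∈ [0,1), let s ≥ 1 be an integer, and set n = s + ⌊3s/2⌋ + 1. Then the A_α-spectral radius of G = K_s ∨ ((⌊3s/2⌋+1)K₁) equals the largest real root of x² − (αn + s − 1)x + (2α−1)s⌊3s/2⌋ + αs² + αs − s = 0; equivalently, ρ_α(G) = (αn + s − 1 + √((αn+s−1)² − 4((2α−1)s⌊3s/2⌋ + αs² + αs − s)))/2. -/

import Mathlib

open Finset

/-- The join `G ∨g H` of two graphs: the disjoint union together with all edges
between the two parts. -/
def SimpleGraph.gjoin {α β : Type*} (G : SimpleGraph α) (H : SimpleGraph β) :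
    SimpleGraph (α ⊕ β) where
  Adj u v := match u, v with
    | Sum.inl u, Sum.inl v => G.Adj u v
    | Sum.inr u, Sum.inr v => H.Adj u v
    | _, _ => True
  symm := ⟨fun u v => match u, v with
    | Sum.inl u, Sum.inl v => G.adj_symm
    | Sum.inr u, Sum.inr v => H.adj_symm
    | Sum.inl _, Sum.inr _ | Sum.inr _, Sum.inl _ => fun _ => trivial⟩
  loopless := ⟨fun u => by cases u <;> simp⟩

infixl:60 " ∨g " => SimpleGraph.gjoin

/-- The `A_α`-matrix `α • D(G) + (1-α) • A(G)` of a graph `G`. -/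
noncomputable def aAlphaMatrix {V : Type*} [Fintype V] [DecidableEq V]
    (α : ℝ) (G : SimpleGraph V) : Matrix V V ℝ := by
  classical
  exact α • Matrix.diagonal (fun v => (G.degree v : ℝ)) + (1 - α) • G.adjMatrix ℝ

/-- The `A_α`-spectral radius `ρ_α(G)`: the largest eigenvalue of `A_α(G)`. -/
noncomputable def rhoAlpha {V : Type*} [Fintype V] [DecidableEq V]
    (α : ℝ) (G : SimpleGraph V) : ℝ :=
  sSup (spectrum ℝ (aAlphaMatrix α G))

/-- The signless Laplacian matrix `Q(G) = D(G) + A(G)`. -/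
noncomputable def signlessLaplacian {V : Type*} [Fintype V] [DecidableEq V]
    (G : SimpleGraph V) : Matrix V V ℝ := by
  classical
  exact Matrix.diagonal (fun v => (G.degree v : ℝ)) + G.adjMatrix ℝ

/-- `q(G)`: the largest eigenvalue of the signless Laplacian matrix of `G`. -/
noncomputable def qIndex {V : Type*} [Fintype V] [DecidableEq V]
    (G : SimpleGraph V) : ℝ :=
  sSup (spectrum ℝ (signlessLaplacian G))

/-- The number of edges (the size) of a graph. -/
noncomputable def edgeCount {V : Type*} [Fintype V] [DecidableEq V]
    (G : SimpleGraph V) : ℕ := by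
  classical
  exact G.edgeFinset.card

/-- `i(G - S)`: the number of isolated vertices of the graph obtained from `G`
by deleting the vertices of `S` together with all edges incident to `S`. -/
noncomputable def isolGminus {V : Type*} [Fintype V] [DecidableEq V]
    (G : SimpleGraph V) (S : Finset V) : ℕ := by
  classical
  exact (Finset.univ.filter (fun v => v ∉ S ∧ ∀ u, G.Adj v u → u ∈ S)).card

/-- `F(n)`: the edge bound from Theorem 1.1. -/
def Fbound (n : ℕ) : ℕ :=
  if n = 6 then 9 else if n = 8 then 18 else (n - 2).choose 2 + 2

/-- `f(α)`: the order bound from Theorem 1.2. -/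
noncomputable def fAlpha (α : ℝ) : ℝ :=
  if α ≤ 1 / 2 then 20 else if α ≤ 5 / 7 then 25 else 7 / (1 - α) + 3


/-!
The partition of `K_s ∨ tK₁` into the clique and the independent set is equitable: `A_α` maps
vectors that are constant on the two parts to such vectors, acting on them by the quotient matrix
`B = [[α(s+t-1) + (1-α)(s-1), (1-α)t], [(1-α)s, αs]]`, whose characteristic polynomial is the
quadratic of the statement (`t = ⌊3s/2⌋ + 1`, `n = s + t`). Its larger root `ρ` exceeds `αs`,
so `(ρ - αs, (1-α)s)` is a positive eigenvector of `B` and lifts to a positive eigenvector of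
`A_α`. As `A_α` is symmetric and entrywise nonnegative, pairing an eigenvector `x` of eigenvalue
`μ` with it gives `|μ| ≤ ρ`; hence `ρ = ρ_α(G)`.
-/

namespace Matrix

variable {n : Type*} [Fintype n] [DecidableEq n]

theorem mem_spectrum_iff_exists_mulVec_eq_smul {K : Type*} [Field K] (A : Matrix n n K) (μ : K) :
    μ ∈ spectrum K A ↔ ∃ v ≠ 0, A *ᵥ v = μ • v := by
  rw [← spectrum_toLin', ← Module.End.hasEigenvalue_iff_mem_spectrum]
  constructor
  · intro h
    obtain ⟨v, hv⟩ := h.exists_hasEigenvector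
    exact ⟨v, hv.2, Module.End.mem_eigenspace_iff.1 hv.1⟩
  · rintro ⟨v, hv0, hv⟩
    exact Module.End.hasEigenvalue_of_hasEigenvector ⟨Module.End.mem_eigenspace_iff.2 hv, hv0⟩

theorem le_of_mem_spectrum_of_vecMul_eq_smul {A : Matrix n n ℝ} (hA : ∀ i j, 0 ≤ A i j)
    {w : n → ℝ} (hw : ∀ i, 0 < w i) {ρ : ℝ} (hρ : w ᵥ* A = ρ • w) {μ : ℝ}
    (hμ : μ ∈ spectrum ℝ A) : μ ≤ ρ := by
  obtain ⟨x, hx0, hx⟩ := (A.mem_spectrum_iff_exists_mulVec_eq_smul μ).1 hμ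
  set u : n → ℝ := fun i => |x i|
  have hu : ∀ i, |μ| * u i ≤ (A *ᵥ u) i := fun i => by
    calc |μ| * u i = |(A *ᵥ x) i| := by simp [u, hx, abs_mul]
      _ ≤ ∑ j, |A i j * x j| := Finset.abs_sum_le_sum_abs _ _
      _ = (A *ᵥ u) i := by simp [mulVec, dotProduct, u, abs_mul, abs_of_nonneg (hA _ _)]
  have hwu : 0 < w ⬝ᵥ u := by
    obtain ⟨i, hi⟩ := Function.ne_iff.mp hx0
    exact Finset.sum_pos' (fun j _ => mul_nonneg (hw j).le (abs_nonneg _))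
      ⟨i, Finset.mem_univ i, mul_pos (hw i) (abs_pos.mpr hi)⟩
  have : |μ| * (w ⬝ᵥ u) ≤ ρ * (w ⬝ᵥ u) := by
    calc |μ| * (w ⬝ᵥ u) = w ⬝ᵥ (|μ| • u) := by rw [dotProduct_smul, smul_eq_mul]
      _ ≤ w ⬝ᵥ (A *ᵥ u) := Finset.sum_le_sum fun i _ =>
          mul_le_mul_of_nonneg_left (hu i) (hw i).le
      _ = ρ * (w ⬝ᵥ u) := by rw [dotProduct_mulVec, hρ, smul_dotProduct, smul_eq_mul]
  exact (le_abs_self μ).trans (le_of_mul_le_mul_right this hwu)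

theorem isGreatest_spectrum_of_mulVec_eq_smul [Nonempty n] {A : Matrix n n ℝ} (hsymm : A.IsSymm)
    (hA : ∀ i j, 0 ≤ A i j) {w : n → ℝ} (hw : ∀ i, 0 < w i) {ρ : ℝ} (hρ : A *ᵥ w = ρ • w) :
    IsGreatest (spectrum ℝ A) ρ := by
  refine ⟨(A.mem_spectrum_iff_exists_mulVec_eq_smul ρ).2 ⟨w, ?_, hρ⟩,
    fun μ hμ => le_of_mem_spectrum_of_vecMul_eq_smul hA hw ?_ hμ⟩
  · obtain ⟨i⟩ := ‹Nonempty n›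
    exact fun h => (hw i).ne' (congrFun h i)
  · rw [← mulVec_transpose, hsymm.eq, hρ]

end Matrix

namespace SimpleGraph

open Sum

variable {α β : Type*} (G : SimpleGraph α) (H : SimpleGraph β)

@[simp] lemma gjoin_adj_inl_inl (a a' : α) : (G ∨g H).Adj (inl a) (inl a') ↔ G.Adj a a' := Iff.rfl

@[simp] lemma gjoin_adj_inr_inr (b b' : β) : (G ∨g H).Adj (inr b) (inr b') ↔ H.Adj b b' := Iff.rfl

@[simp] lemma gjoin_adj_inl_inr (a : α) (b : β) : (G ∨g H).Adj (inl a) (inr b) := trivial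

@[simp] lemma gjoin_adj_inr_inl (b : β) (a : α) : (G ∨g H).Adj (inr b) (inl a) := trivial

lemma neighborFinset_gjoin_inl [Fintype β] (a : α) [Fintype (G.neighborSet a)]
    [Fintype ((G ∨g H).neighborSet (inl a))] :
    (G ∨g H).neighborFinset (inl a) = (G.neighborFinset a).disjSum univ := by
  ext (u | u) <;> simp

lemma neighborFinset_gjoin_inr [Fintype α] (b : β) [Fintype (H.neighborSet b)]
    [Fintype ((G ∨g H).neighborSet (inr b))] :
    (G ∨g H).neighborFinset (inr b) = univ.disjSum (H.neighborFinset b) := by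
  ext (u | u) <;> simp

end SimpleGraph

section AAlphaMatrix

open Matrix SimpleGraph Sum

variable {V : Type*} [Fintype V] [DecidableEq V]

lemma aAlphaMatrix_isSymm (α : ℝ) (G : SimpleGraph V) : (aAlphaMatrix α G).IsSymm := by
  classical
  simp only [aAlphaMatrix]
  exact ((isSymm_diagonal _).smul α).add ((isSymm_adjMatrix G).smul (1 - α))

lemma aAlphaMatrix_nonneg {α : ℝ} (hα0 : 0 ≤ α) (hα1 : α ≤ 1) (G : SimpleGraph V) (u v : V) :
    0 ≤ aAlphaMatrix α G u v := by
  classical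
  simp only [aAlphaMatrix, Matrix.add_apply, Matrix.smul_apply, smul_eq_mul, diagonal_apply,
    adjMatrix_apply]
  have := sub_nonneg.2 hα1
  split_ifs <;> positivity

lemma aAlphaMatrix_mulVec_apply (α : ℝ) (G : SimpleGraph V) (w : V → ℝ) (v : V)
    [Fintype (G.neighborSet v)] :
    (aAlphaMatrix α G *ᵥ w) v =
      α * G.degree v * w v + (1 - α) * ∑ u ∈ G.neighborFinset v, w u := by
  classical
  simp only [aAlphaMatrix, add_mulVec, smul_mulVec, Pi.add_apply, Pi.smul_apply, smul_eq_mul,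
    mulVec_diagonal, adjMatrix_mulVec_apply, mul_assoc]
  congr!

variable {s t : ℕ}

lemma aAlphaMatrix_top_gjoin_bot_mulVec_elim (α a b : ℝ) :
    aAlphaMatrix α ((⊤ : SimpleGraph (Fin s)) ∨g (⊥ : SimpleGraph (Fin t))) *ᵥ
        Sum.elim (fun _ => a) (fun _ => b) =
      Sum.elim (fun _ => (α * (s + t - 1) + (1 - α) * (s - 1)) * a + (1 - α) * t * b)
        (fun _ => (1 - α) * s * a + α * s * b) := by
  classical
  ext (i | j)
  · have hi : (⊤ : SimpleGraph (Fin s)).neighborFinset i = {i}ᶜ := by ext; simp [eq_comm]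
    have hcard : ((#({i}ᶜ : Finset (Fin s)) : ℕ) : ℝ) = s - 1 := by
      rw [card_compl, card_singleton, Fintype.card_fin, Nat.cast_sub i.pos, Nat.cast_one]
    rw [aAlphaMatrix_mulVec_apply, ← card_neighborFinset_eq_degree, neighborFinset_gjoin_inl,
      sum_disjSum, card_disjSum, hi]
    simp only [elim_inl, elim_inr, sum_const, card_univ, Fintype.card_fin, nsmul_eq_mul,
      Nat.cast_add, hcard]
    ring
  · rw [aAlphaMatrix_mulVec_apply, ← card_neighborFinset_eq_degree, neighborFinset_gjoin_inr,
      sum_disjSum, card_disjSum, neighborFinset_bot]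
    simp only [elim_inl, elim_inr, sum_const, card_univ, Fintype.card_fin, nsmul_eq_mul,
      card_empty, Nat.cast_add, Nat.cast_zero]
    ring

theorem isGreatest_spectrum_aAlphaMatrix_top_gjoin_bot {α : ℝ} (hα0 : 0 ≤ α) (hα1 : α < 1)
    (hs : 0 < s) {ρ : ℝ} (hρs : α * s < ρ)
    (hρ : (ρ - (α * (s + t - 1) + (1 - α) * (s - 1))) * (ρ - α * s) = (1 - α) ^ 2 * s * t) :
    IsGreatest
      (spectrum ℝ (aAlphaMatrix α ((⊤ : SimpleGraph (Fin s)) ∨g (⊥ : SimpleGraph (Fin t))))) ρ := by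
  have : Nonempty (Fin s ⊕ Fin t) := ⟨inl ⟨0, hs⟩⟩
  refine isGreatest_spectrum_of_mulVec_eq_smul (aAlphaMatrix_isSymm α _)
    (aAlphaMatrix_nonneg hα0 hα1.le _) (w := Sum.elim (fun _ => ρ - α * s) fun _ => (1 - α) * s)
    ?_ ?_
  · have : 0 < (1 - α) * s := mul_pos (sub_pos.2 hα1) (Nat.cast_pos.2 hs)
    rintro (i | j) <;> simpa
  · rw [aAlphaMatrix_top_gjoin_bot_mulVec_elim]
    ext (i | j)
    · simp only [elim_inl, Pi.smul_apply, smul_eq_mul]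
      linear_combination -hρ
    · simp only [elim_inr, Pi.smul_apply, smul_eq_mul]
      ring

end AAlphaMatrix

theorem isGreatest_setOf_quadratic_eq_zero {b c : ℝ} (hD : 0 ≤ b ^ 2 - 4 * c) :
    IsGreatest {x : ℝ | x ^ 2 - b * x + c = 0} ((b + √(b ^ 2 - 4 * c)) / 2) := by
  refine ⟨show _ = _ by linear_combination Real.sq_sqrt hD / 4, fun x (hx : _ = _) => ?_⟩
  have hsq : (2 * x - b) ^ 2 = b ^ 2 - 4 * c := by linear_combination 4 * hx
  have : 2 * x - b ≤ √(b ^ 2 - 4 * c) := hsq ▸ Real.le_sqrt_of_sq_le le_rfl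
  linarith

theorem lt_largest_quadratic_root_of_neg {b c y : ℝ} (hy : y ^ 2 - b * y + c < 0) :
    y < (b + √(b ^ 2 - 4 * c)) / 2 := by
  have : 2 * y - b < √(b ^ 2 - 4 * c) := Real.lt_sqrt_of_sq_lt (by linear_combination 4 * hy)
  linarith

theorem rhoAlpha_top_gjoin_bot {α : ℝ} (hα0 : 0 ≤ α) (hα1 : α < 1) {s t : ℕ} (hs : 0 < s)
    (ht : 0 < t) {b c : ℝ} (hb : b = α * (s + t) + s - 1)
    (hc : c = (α * t + s - 1) * (α * s) - (1 - α) ^ 2 * s * t) :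
    IsGreatest {x : ℝ | x ^ 2 - b * x + c = 0}
        (rhoAlpha α ((⊤ : SimpleGraph (Fin s)) ∨g (⊥ : SimpleGraph (Fin t)))) ∧
      rhoAlpha α ((⊤ : SimpleGraph (Fin s)) ∨g (⊥ : SimpleGraph (Fin t))) =
        (b + √(b ^ 2 - 4 * c)) / 2 := by
  have hneg : (α * s) ^ 2 - b * (α * s) + c < 0 := by
    have : 0 < (1 - α) ^ 2 * s * t := by
      have := sub_pos.2 hα1
      positivity
    linear_combination this - α * s * hb + hc
  have hroots := isGreatest_setOf_quadratic_eq_zero (b := b) (c := c)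
    (by nlinarith [sq_nonneg (2 * (α * s) - b)])
  have hroot := hroots.1
  rw [Set.mem_ofPred_eq] at hroot
  have hρ : rhoAlpha α ((⊤ : SimpleGraph (Fin s)) ∨g (⊥ : SimpleGraph (Fin t))) =
      (b + √(b ^ 2 - 4 * c)) / 2 :=
    (isGreatest_spectrum_aAlphaMatrix_top_gjoin_bot hα0 hα1 hs
      (lt_largest_quadratic_root_of_neg hneg)
      (by linear_combination hroot + (b + √(b ^ 2 - 4 * c)) / 2 * hb - hc)).csSup_eq
  exact ⟨hρ ▸ hroots, hρ⟩

theorem rhoAlpha_case21 (α : ℝ) (hα0 : 0 ≤ α) (hα1 : α < 1)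
    (s n : ℕ) (hs : 1 ≤ s) (hn : n = s + 3 * s / 2 + 1) :
    IsGreatest {x : ℝ | x ^ 2 - (α * (n : ℝ) + (s : ℝ) - 1) * x
        + (2 * α - 1) * (s : ℝ) * ((3 * s / 2 : ℕ) : ℝ)
        + α * (s : ℝ) ^ 2 + α * (s : ℝ) - (s : ℝ) = 0}
      (rhoAlpha α ((⊤ : SimpleGraph (Fin s)) ∨g (⊥ : SimpleGraph (Fin (3 * s / 2 + 1))))) ∧
    rhoAlpha α ((⊤ : SimpleGraph (Fin s)) ∨g (⊥ : SimpleGraph (Fin (3 * s / 2 + 1)))) =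
      (α * (n : ℝ) + (s : ℝ) - 1 +
        Real.sqrt ((α * (n : ℝ) + (s : ℝ) - 1) ^ 2
          - 4 * ((2 * α - 1) * (s : ℝ) * ((3 * s / 2 : ℕ) : ℝ)
            + α * (s : ℝ) ^ 2 + α * (s : ℝ) - (s : ℝ)))) / 2 := by
  subst hn
  obtain ⟨hroots, hρ⟩ := rhoAlpha_top_gjoin_bot hα0 hα1 hs (Nat.succ_pos (3 * s / 2))
    (b := α * ((s + 3 * s / 2 + 1 : ℕ) : ℝ) + s - 1)
    (c := (2 * α - 1) * s * ((3 * s / 2 : ℕ) : ℝ) + α * s ^ 2 + α * s - s)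
    (by push_cast; ring) (by push_cast; ring)
  refine ⟨?_, hρ⟩
  convert hroots using 4 with x
  ring
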